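/- arXiv:2202.03855 — 2 statements merged into one kernel-verified Lean document; each statement's English description precedes it below -/
import Mathlib

section
/- Let γ > 1 and define F : (0,∞) → ℝ by F(M) = (γ+1)/((γ−1)[(γ−1)M²+2]) + (1/2)ln(M²/[(γ−1)M²+2]). Then F is differentiable on (0,∞) with F'(M) = 4M(1−M²)/(M²[(γ−1)M²+2]²); consequently F'(M) > 0 for 0 < M < 1 (subsonic range), F'(M) < 0 for M > 1 (supersonic range), and F is strictly increasing on (0,1) and strictly decreasing on (1,∞). -/
/-- The function `F` governing the dependence of the Mach number on position for
unidimensional steady compressible flows with mass addition (polytropic gas,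
adiabatic exponent `γ > 1`):
`F(M) = (γ+1)/((γ−1)[(γ−1)M²+2]) + (1/2) ln(M²/[(γ−1)M²+2])`. -/
noncomputable def Ffun (γ : ℝ) (M : ℝ) : ℝ :=
  (γ + 1) / ((γ - 1) * ((γ - 1) * M ^ 2 + 2)) +
    (1 / 2) * Real.log (M ^ 2 / ((γ - 1) * M ^ 2 + 2))

section Monotone

variable {D : Set ℝ} {f f' : ℝ → ℝ}

theorem strictMonoOn_of_hasDerivAt_pos (hD : Convex ℝ D) (hf : ∀ x ∈ D, HasDerivAt f (f' x) x)
    (hf' : ∀ x ∈ D, 0 < f' x) : StrictMonoOn f D :=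
  strictMonoOn_of_hasDerivWithinAt_pos hD
    (fun x hx ↦ (hf x hx).continuousAt.continuousWithinAt)
    (fun x hx ↦ (hf x (interior_subset hx)).hasDerivWithinAt)
    (fun x hx ↦ hf' x (interior_subset hx))

theorem strictAntiOn_of_hasDerivAt_neg (hD : Convex ℝ D) (hf : ∀ x ∈ D, HasDerivAt f (f' x) x)
    (hf' : ∀ x ∈ D, f' x < 0) : StrictAntiOn f D :=
  strictAntiOn_of_hasDerivWithinAt_neg hD
    (fun x hx ↦ (hf x hx).continuousAt.continuousWithinAt)
    (fun x hx ↦ (hf x (interior_subset hx)).hasDerivWithinAt)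
    (fun x hx ↦ hf' x (interior_subset hx))

end Monotone

section Mach

variable {γ M : ℝ}

theorem sub_one_mul_sq_add_two_pos (hγ : 1 ≤ γ) (M : ℝ) : 0 < (γ - 1) * M ^ 2 + 2 := by
  have : 0 ≤ (γ - 1) * M ^ 2 := mul_nonneg (sub_nonneg.2 hγ) (sq_nonneg M)
  linarith

theorem hasDerivAt_Ffun (hγ : γ ≠ 1) (hM : M ≠ 0) (hD : (γ - 1) * M ^ 2 + 2 ≠ 0) :
    HasDerivAt (Ffun γ) (4 * M * (1 - M ^ 2) / (M ^ 2 * ((γ - 1) * M ^ 2 + 2) ^ 2)) M := by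
  have hγ' : γ - 1 ≠ 0 := sub_ne_zero.2 hγ
  have hsq : HasDerivAt (fun M : ℝ ↦ M ^ 2) (2 * M) M := by simpa using hasDerivAt_pow 2 M
  have hDer : HasDerivAt (fun M : ℝ ↦ (γ - 1) * M ^ 2 + 2) ((γ - 1) * (2 * M)) M :=
    (hsq.const_mul (γ - 1)).add_const 2
  have hfirst := (hasDerivAt_const M (γ + 1)).div (hDer.const_mul (γ - 1)) (mul_ne_zero hγ' hD)
  have hlog := ((hsq.div hDer hD).log (div_ne_zero (pow_ne_zero 2 hM) hD)).const_mul (1 / 2 : ℝ)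
  refine (hfirst.add hlog).congr_deriv ?_
  simp only [Pi.div_apply]
  field_simp
  ring

theorem Ffun_deriv_pos (hD : (γ - 1) * M ^ 2 + 2 ≠ 0) (hM₀ : 0 < M) (hM₁ : M < 1) :
    0 < 4 * M * (1 - M ^ 2) / (M ^ 2 * ((γ - 1) * M ^ 2 + 2) ^ 2) := by
  have : 0 < 1 - M ^ 2 := by nlinarith
  positivity

theorem Ffun_deriv_neg (hD : (γ - 1) * M ^ 2 + 2 ≠ 0) (hM : 1 < M) :
    4 * M * (1 - M ^ 2) / (M ^ 2 * ((γ - 1) * M ^ 2 + 2) ^ 2) < 0 := by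
  have hM₀ : 0 < M := one_pos.trans hM
  exact div_neg_of_neg_of_pos (by nlinarith) (by positivity)

end Mach

/-- For `γ > 1`, `F` is differentiable on `(0,∞)` with
`F'(M) = 4M(1−M²)/(M²[(γ−1)M²+2]²)`; consequently `F' > 0` on the subsonic range
`0 < M < 1`, `F' < 0` on the supersonic range `M > 1`, and `F` is strictly
increasing on `(0,1)` and strictly decreasing on `(1,∞)`. -/
theorem stmt15 (γ : ℝ) (hγ : 1 < γ) :
    (∀ M : ℝ, 0 < M →
      HasDerivAt (Ffun γ)
        (4 * M * (1 - M ^ 2) / (M ^ 2 * ((γ - 1) * M ^ 2 + 2) ^ 2)) M) ∧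
    (∀ M : ℝ, 0 < M → M < 1 →
      0 < 4 * M * (1 - M ^ 2) / (M ^ 2 * ((γ - 1) * M ^ 2 + 2) ^ 2)) ∧
    (∀ M : ℝ, 1 < M →
      4 * M * (1 - M ^ 2) / (M ^ 2 * ((γ - 1) * M ^ 2 + 2) ^ 2) < 0) ∧
    StrictMonoOn (Ffun γ) (Set.Ioo 0 1) ∧
    StrictAntiOn (Ffun γ) (Set.Ioi 1) := by
  have hD (M : ℝ) := (sub_one_mul_sq_add_two_pos hγ.le M).ne'
  have hderiv (M : ℝ) (hM : 0 < M) := hasDerivAt_Ffun hγ.ne' hM.ne' (hD M)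
  have hpos (M : ℝ) (hM₀ : 0 < M) (hM₁ : M < 1) := Ffun_deriv_pos (hD M) hM₀ hM₁
  have hneg (M : ℝ) (hM : 1 < M) := Ffun_deriv_neg (γ := γ) (hD M) hM
  refine ⟨hderiv, hpos, hneg, ?_, ?_⟩
  · exact strictMonoOn_of_hasDerivAt_pos (convex_Ioo 0 1)
      (fun M hM ↦ hderiv M hM.1) (fun M hM ↦ hpos M hM.1 hM.2)
  · exact strictAntiOn_of_hasDerivAt_neg (convex_Ioi 1)
      (fun M hM ↦ hderiv M (one_pos.trans hM)) hneg
end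

section
/- Let γ > 1, λ ∈ ℝ, let U ⊆ ℝ² be open, let ρ, p : U → (0,∞) and 𝐮 = (u,v) : U → ℝ² be continuously differentiable, and let m : U → ℝ be continuous. Define E = ½|𝐮|² + γp/((γ−1)ρ), A = p·ρ^{−γ}, c² = γp/ρ, M² = |𝐮|²/c², φ₃ = D_𝐮E + λmE, and φ₀ = D_𝐮𝐮 + ∇p/ρ + λm𝐮. Then at every point of U, ((γ−1)/ρ^{γ−1})·(φ₃ − φ₀·𝐮) = D_𝐮A + λγm(1 − ((γ−1)/2)M²)·A. -/
/-- Partial derivative in the `x`-direction of a function on `ℝ²`. -/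
noncomputable def px (f : ℝ × ℝ → ℝ) (z : ℝ × ℝ) : ℝ := fderiv ℝ f z (1, 0)

/-- Partial derivative in the `y`-direction of a function on `ℝ²`. -/
noncomputable def py (f : ℝ × ℝ → ℝ) (z : ℝ × ℝ) : ℝ := fderiv ℝ f z (0, 1)

/-- Directional derivative `D_𝐮 f = u ∂ₓ f + v ∂_y f` along the velocity field `𝐮 = (u,v)`. -/
noncomputable def DU (u v f : ℝ × ℝ → ℝ) (z : ℝ × ℝ) : ℝ := u z * px f z + v z * py f z

/-!
`D_𝐮 f` is the derivative of `f` in the direction `𝐮`, so it obeys the sum, product, quotient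
and power rules. Expanding both sides with them leaves an identity that is linear in
`D_𝐮u, D_𝐮v, D_𝐮p, D_𝐮ρ`: the kinetic terms `𝐮·D_𝐮𝐮` cancel between `φ₃` and `φ₀·𝐮`, the pressure
term `∇p·𝐮` is `D_𝐮p`, and what remains is field arithmetic, using `ρ^{γ-1} = ρ^γ/ρ`.
-/

section DirectionalDerivative

variable {u v f g : ℝ × ℝ → ℝ} {z : ℝ × ℝ}

theorem DU_eq_fderiv_apply (u v f : ℝ × ℝ → ℝ) (z : ℝ × ℝ) :
    DU u v f z = fderiv ℝ f z (u z, v z) := by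
  have hdir : (u z, v z) = u z • ((1, 0) : ℝ × ℝ) + v z • (0, 1) := by simp
  rw [hdir, map_add, map_smul, map_smul, smul_eq_mul, smul_eq_mul]
  rfl

theorem HasFDerivAt.DU_eq {f' : ℝ × ℝ →L[ℝ] ℝ} (hf : HasFDerivAt f f' z) :
    DU u v f z = f' (u z, v z) := by
  rw [DU_eq_fderiv_apply, hf.fderiv]

theorem DU_fun_add (hf : DifferentiableAt ℝ f z) (hg : DifferentiableAt ℝ g z) :
    DU u v (fun w => f w + g w) z = DU u v f z + DU u v g z := by
  rw [(hf.hasFDerivAt.fun_add hg.hasFDerivAt).DU_eq, hf.hasFDerivAt.DU_eq, hg.hasFDerivAt.DU_eq]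
  rfl

theorem DU_fun_mul (hf : DifferentiableAt ℝ f z) (hg : DifferentiableAt ℝ g z) :
    DU u v (fun w => f w * g w) z = f z * DU u v g z + g z * DU u v f z := by
  rw [(hf.hasFDerivAt.fun_mul hg.hasFDerivAt).DU_eq, hf.hasFDerivAt.DU_eq, hg.hasFDerivAt.DU_eq]
  rfl

theorem DU_const_mul (c : ℝ) (hf : DifferentiableAt ℝ f z) :
    DU u v (fun w => c * f w) z = c * DU u v f z := by
  rw [(hf.hasFDerivAt.const_mul c).DU_eq, hf.hasFDerivAt.DU_eq]
  rfl

theorem DU_div_const (hf : DifferentiableAt ℝ f z) (c : ℝ) :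
    DU u v (fun w => f w / c) z = DU u v f z / c := by
  simp only [div_eq_mul_inv]
  rw [(hf.hasFDerivAt.mul_const c⁻¹).DU_eq, hf.hasFDerivAt.DU_eq]
  simp [mul_comm]

theorem DU_fun_pow (hf : DifferentiableAt ℝ f z) (n : ℕ) :
    DU u v (fun w => f w ^ n) z = n * f z ^ (n - 1) * DU u v f z := by
  rw [(hf.hasFDerivAt.pow n).DU_eq, hf.hasFDerivAt.DU_eq]
  simp [mul_assoc]

theorem DU_fun_div (hf : DifferentiableAt ℝ f z) (hg : DifferentiableAt ℝ g z) (hgz : g z ≠ 0) :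
    DU u v (fun w => f w / g w) z = (g z * DU u v f z - f z * DU u v g z) / g z ^ 2 := by
  have hinv : HasFDerivAt (fun w => (g w)⁻¹) (-(g z ^ 2)⁻¹ • fderiv ℝ g z) z :=
    (hasDerivAt_inv hgz).comp_hasFDerivAt z hg.hasFDerivAt
  simp only [div_eq_mul_inv]
  rw [(hf.hasFDerivAt.fun_mul hinv).DU_eq, hf.hasFDerivAt.DU_eq, hg.hasFDerivAt.DU_eq]
  simp only [add_apply, smul_apply, smul_eq_mul]
  field_simp
  ring

theorem DU_rpow_const (hf : DifferentiableAt ℝ f z) (hfz : f z ≠ 0) (r : ℝ) :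
    DU u v (fun w => f w ^ r) z = r * f z ^ (r - 1) * DU u v f z := by
  rw [(hf.hasFDerivAt.rpow_const (Or.inl hfz)).DU_eq, hf.hasFDerivAt.DU_eq]
  rfl

end DirectionalDerivative

section Euler

variable {u v ρ p : ℝ × ℝ → ℝ} {z : ℝ × ℝ}

theorem DU_energy {γ : ℝ} (hγ : γ ≠ 1) (hu : DifferentiableAt ℝ u z)
    (hv : DifferentiableAt ℝ v z) (hp : DifferentiableAt ℝ p z) (hρ : DifferentiableAt ℝ ρ z)
    (hρz : ρ z ≠ 0) :
    DU u v (fun w => (u w ^ 2 + v w ^ 2) / 2 + γ * p w / ((γ - 1) * ρ w)) z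
      = u z * DU u v u z + v z * DU u v v z
        + γ / (γ - 1) * (ρ z * DU u v p z - p z * DU u v ρ z) / ρ z ^ 2 := by
  have hγρ : (γ - 1) * ρ z ≠ 0 := mul_ne_zero (sub_ne_zero.mpr hγ) hρz
  rw [DU_fun_add (by fun_prop) (by fun_prop (disch := exact hγρ)),
    DU_div_const (by fun_prop), DU_fun_add (by fun_prop) (by fun_prop), DU_fun_pow hu,
    DU_fun_pow hv, DU_fun_div (hp.const_mul γ) (hρ.const_mul _) hγρ, DU_const_mul _ hp,
    DU_const_mul _ hρ]
  field_simp
  ring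

theorem DU_mul_rpow_neg (γ : ℝ) (hp : DifferentiableAt ℝ p z) (hρ : DifferentiableAt ℝ ρ z)
    (hρz : ρ z ≠ 0) :
    DU u v (fun w => p w * ρ w ^ (-γ)) z
      = ρ z ^ (-γ) * DU u v p z - γ * p z * ρ z ^ (-γ - 1) * DU u v ρ z := by
  rw [DU_fun_mul hp (hρ.rpow_const (Or.inl hρz)), DU_rpow_const hρ hρz]
  ring

end Euler

theorem stmt18_general (γ lam : ℝ) (hγ : 1 < γ) (U : Set (ℝ × ℝ)) (hU : IsOpen U)
    (ρ p u v m : ℝ × ℝ → ℝ)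
    (hρpos : ∀ z ∈ U, 0 < ρ z) (hppos : ∀ z ∈ U, 0 < p z)
    (hρ : ContDiffOn ℝ 1 ρ U) (hp : ContDiffOn ℝ 1 p U)
    (hu : ContDiffOn ℝ 1 u U) (hv : ContDiffOn ℝ 1 v U) :
    ∀ z ∈ U,
      ((γ - 1) / ρ z ^ (γ - 1)) *
          ((DU u v (fun w => (u w ^ 2 + v w ^ 2) / 2 + γ * p w / ((γ - 1) * ρ w)) z
              + lam * m z * ((u z ^ 2 + v z ^ 2) / 2 + γ * p z / ((γ - 1) * ρ z)))
            - ((DU u v u z + px p z / ρ z + lam * m z * u z) * u z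
                + (DU u v v z + py p z / ρ z + lam * m z * v z) * v z))
        = DU u v (fun w => p w * ρ w ^ (-γ)) z
            + lam * γ * m z *
              (1 - ((γ - 1) / 2) * ((u z ^ 2 + v z ^ 2) / (γ * p z / ρ z))) *
              (p z * ρ z ^ (-γ)) := by
  intro z hz
  have hdiff {f : ℝ × ℝ → ℝ} (hf : ContDiffOn ℝ 1 f U) : DifferentiableAt ℝ f z :=
    (hf.contDiffAt (hU.mem_nhds hz)).differentiableAt one_ne_zero
  have hρz := hρpos z hz
  have hpz := hppos z hz
  have hγ1 : γ - 1 ≠ 0 := sub_ne_zero.mpr hγ.ne'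
  rw [DU_energy hγ.ne' (hdiff hu) (hdiff hv) (hdiff hp) (hdiff hρ) hρz.ne',
    DU_mul_rpow_neg γ (hdiff hp) (hdiff hρ) hρz.ne']
  simp only [DU, Real.rpow_sub_one hρz.ne', Real.rpow_neg hρz.le]
  field_simp
  ring

/-- For a polytropic gas (`γ > 1`), with `ρ, p > 0` and `𝐮 = (u,v)`
continuously differentiable on an open `U ⊆ ℝ²`, `m` continuous, setting
`E = ½|𝐮|² + γp/((γ−1)ρ)`, `A = p·ρ^{−γ}`, `c² = γp/ρ`, `M² = |𝐮|²/c²`,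
`φ₃ = D_𝐮E + λmE` and `φ₀ = D_𝐮𝐮 + ∇p/ρ + λm𝐮`, one has at every point of `U`:
`((γ−1)/ρ^{γ−1})·(φ₃ − φ₀·𝐮) = D_𝐮A + λγm(1 − ((γ−1)/2)M²)·A`. -/
theorem stmt18 (γ lam : ℝ) (hγ : 1 < γ) (U : Set (ℝ × ℝ)) (hU : IsOpen U)
    (ρ p u v m : ℝ × ℝ → ℝ)
    (hρpos : ∀ z ∈ U, 0 < ρ z) (hppos : ∀ z ∈ U, 0 < p z)
    (hρ : ContDiffOn ℝ 1 ρ U) (hp : ContDiffOn ℝ 1 p U)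
    (hu : ContDiffOn ℝ 1 u U) (hv : ContDiffOn ℝ 1 v U)
    (hm : ContinuousOn m U) :
    ∀ z ∈ U,
      ((γ - 1) / ρ z ^ (γ - 1)) *
          ((DU u v (fun w => (u w ^ 2 + v w ^ 2) / 2 + γ * p w / ((γ - 1) * ρ w)) z
              + lam * m z * ((u z ^ 2 + v z ^ 2) / 2 + γ * p z / ((γ - 1) * ρ z)))
            - ((DU u v u z + px p z / ρ z + lam * m z * u z) * u z
                + (DU u v v z + py p z / ρ z + lam * m z * v z) * v z))
        = DU u v (fun w => p w * ρ w ^ (-γ)) z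
            + lam * γ * m z *
              (1 - ((γ - 1) / 2) * ((u z ^ 2 + v z ^ 2) / (γ * p z / ρ z))) *
              (p z * ρ z ^ (-γ)) :=
  stmt18_general γ lam hγ U hU ρ p u v m hρpos hppos hρ hp hu hv
end
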